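/- arXiv:2102.13291 — 3 statements merged into one kernel-verified Lean document; each statement's English description precedes it below -/
import Mathlib

section
/- (Soundness of the first-approximation rule) For any Kripke frame F and hybrid formulas φ, ψ not containing the nominals i₀, i₁: F validates φ ≤ ψ iff F validates the quasi-inequality (i₀ ≤ φ & ψ ≤ ¬i₁) ⇒ i₀ ≤ ¬i₁. -/
inductive Form where
  | prop : ℕ → Form
  | nom : ℕ → Form
  | svar : ℕ → Form
  | bot : Form
  | top : Form
  | neg : Form → Form
  | and : Form → Form → Form
  | or : Form → Form → Form
  | imp : Form → Form → Form
  | box : Form → Form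
  | dia : Form → Form
  | atN : ℕ → Form → Form
  | atS : ℕ → Form → Form
  | bind : ℕ → Form → Form
  | bbox : Form → Form
  | bdia : Form → Form
  | glA : Form → Form
  | glE : Form → Form
  | sall : ℕ → Form → Form
  | sex : ℕ → Form → Form

structure Model (W : Type) where
  R : W → W → Prop
  Vp : ℕ → W → Prop
  Vn : ℕ → W

def upd {W : Type} (g : ℕ → W) (x : ℕ) (w : W) : ℕ → W :=
  fun y => if y = x then w else g y

def sat {W : Type} (M : Model W) : (ℕ → W) → W → Form → Prop
  | _, w, .prop p => M.Vp p w
  | _, w, .nom i => M.Vn i = w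
  | g, w, .svar x => g x = w
  | _, _, .bot => False
  | _, _, .top => True
  | g, w, .neg φ => ¬ sat M g w φ
  | g, w, .and φ ψ => sat M g w φ ∧ sat M g w ψ
  | g, w, .or φ ψ => sat M g w φ ∨ sat M g w ψ
  | g, w, .imp φ ψ => sat M g w φ → sat M g w ψ
  | g, w, .box φ => ∀ v, M.R w v → sat M g v φ
  | g, w, .dia φ => ∃ v, M.R w v ∧ sat M g v φ
  | g, _, .atN i φ => sat M g (M.Vn i) φ
  | g, _, .atS x φ => sat M g (g x) φ
  | g, w, .bind x φ => sat M (upd g x w) w φ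
  | g, w, .bbox φ => ∀ v, M.R v w → sat M g v φ
  | g, w, .bdia φ => ∃ v, M.R v w ∧ sat M g v φ
  | g, _, .glA φ => ∀ v, sat M g v φ
  | g, _, .glE φ => ∃ v, sat M g v φ
  | g, w, .sall x φ => ∀ v, sat M (upd g x v) w φ
  | g, w, .sex x φ => ∃ v, sat M (upd g x v) w φ

/-- The inequality φ ≤ ψ holds in (M,g). -/
def holdsIneq {W : Type} (M : Model W) (g : ℕ → W) (φ ψ : Form) : Prop :=
  ∀ w, sat M g w φ → sat M g w ψ

/-- Frame validity of an inequality. -/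
def validIneq {W : Type} (R : W → W → Prop) (φ ψ : Form) : Prop :=
  ∀ (Vp : ℕ → W → Prop) (Vn : ℕ → W) (g : ℕ → W),
    holdsIneq ⟨R, Vp, Vn⟩ g φ ψ

/-- The nominal `i` occurs in the formula. -/
def nomIn (i : ℕ) : Form → Prop
  | .prop _ => False
  | .nom j => j = i
  | .svar _ => False
  | .bot => False
  | .top => False
  | .neg φ => nomIn i φ
  | .and φ ψ => nomIn i φ ∨ nomIn i ψ
  | .or φ ψ => nomIn i φ ∨ nomIn i ψ
  | .imp φ ψ => nomIn i φ ∨ nomIn i ψ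
  | .box φ => nomIn i φ
  | .dia φ => nomIn i φ
  | .atN j φ => j = i ∨ nomIn i φ
  | .atS _ φ => nomIn i φ
  | .bind _ φ => nomIn i φ
  | .bbox φ => nomIn i φ
  | .bdia φ => nomIn i φ
  | .glA φ => nomIn i φ
  | .glE φ => nomIn i φ
  | .sall _ φ => nomIn i φ
  | .sex _ φ => nomIn i φ

lemma sat_nom_congr {W : Type} (R : W → W → Prop) (Vp : ℕ → W → Prop)
    (Vn Vn' : ℕ → W) (φ : Form)
    (h : ∀ j, nomIn j φ → Vn j = Vn' j) :
    ∀ g w, sat ⟨R, Vp, Vn⟩ g w φ ↔ sat ⟨R, Vp, Vn'⟩ g w φ := by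
  induction φ with
  | prop p => intro g w; rfl
  | nom j => intro g w; simp [sat, h j rfl]
  | svar x => intro g w; rfl
  | bot => intro g w; rfl
  | top => intro g w; rfl
  | neg φ ih => intro g w; simp only [sat]; rw [ih (fun j hj => h j hj) g w]
  | and φ ψ ihφ ihψ =>
      intro g w; simp only [sat]
      rw [ihφ (fun j hj => h j (Or.inl hj)) g w, ihψ (fun j hj => h j (Or.inr hj)) g w]
  | or φ ψ ihφ ihψ =>
      intro g w; simp only [sat]
      rw [ihφ (fun j hj => h j (Or.inl hj)) g w, ihψ (fun j hj => h j (Or.inr hj)) g w]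
  | imp φ ψ ihφ ihψ =>
      intro g w; simp only [sat]
      rw [ihφ (fun j hj => h j (Or.inl hj)) g w, ihψ (fun j hj => h j (Or.inr hj)) g w]
  | box φ ih =>
      intro g w; simp only [sat]
      exact forall_congr' fun v => imp_congr Iff.rfl (ih (fun j hj => h j hj) g v)
  | dia φ ih =>
      intro g w; simp only [sat]
      exact exists_congr fun v => and_congr Iff.rfl (ih (fun j hj => h j hj) g v)
  | atN j φ ih =>
      intro g w; simp only [sat]
      rw [h j (Or.inl rfl), ih (fun k hk => h k (Or.inr hk)) g _]
  | atS x φ ih => intro g w; simp only [sat]; rw [ih (fun j hj => h j hj) g _]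
  | bind x φ ih => intro g w; simp only [sat]; rw [ih (fun j hj => h j hj) _ w]
  | bbox φ ih =>
      intro g w; simp only [sat]
      exact forall_congr' fun v => imp_congr Iff.rfl (ih (fun j hj => h j hj) g v)
  | bdia φ ih =>
      intro g w; simp only [sat]
      exact exists_congr fun v => and_congr Iff.rfl (ih (fun j hj => h j hj) g v)
  | glA φ ih =>
      intro g w; simp only [sat]
      exact forall_congr' fun v => ih (fun j hj => h j hj) g v
  | glE φ ih =>
      intro g w; simp only [sat]
      exact exists_congr fun v => ih (fun j hj => h j hj) g v
  | sall x φ ih =>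
      intro g w; simp only [sat]
      exact forall_congr' fun v => ih (fun j hj => h j hj) _ w
  | sex x φ ih =>
      intro g w; simp only [sat]
      exact exists_congr fun v => ih (fun j hj => h j hj) _ w

theorem first_approximation_sound {W : Type} (R : W → W → Prop)
    (i₀ i₁ : ℕ) (φ ψ : Form)
    (h₀φ : ¬ nomIn i₀ φ) (h₀ψ : ¬ nomIn i₀ ψ)
    (h₁φ : ¬ nomIn i₁ φ) (h₁ψ : ¬ nomIn i₁ ψ) :
    validIneq R φ ψ ↔
      ∀ (Vp : ℕ → W → Prop) (Vn : ℕ → W) (g : ℕ → W),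
        (holdsIneq ⟨R, Vp, Vn⟩ g (.nom i₀) φ ∧
         holdsIneq ⟨R, Vp, Vn⟩ g ψ (.neg (.nom i₁))) →
        holdsIneq ⟨R, Vp, Vn⟩ g (.nom i₀) (.neg (.nom i₁)) := by
  constructor
  · intro hval Vp Vn g ⟨h1, h2⟩ w hw
    intro hcontra
    have hφ : sat ⟨R, Vp, Vn⟩ g w φ := h1 w hw
    have hψ : sat ⟨R, Vp, Vn⟩ g w ψ := hval Vp Vn g w hφ
    exact h2 w hψ hcontra
  · intro hq Vp Vn g w hφw
    by_contra hψw
    set Vn' : ℕ → W := upd (upd Vn i₀ w) i₁ w with hVn'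
    have hVn'i₀ : Vn' i₀ = w := by
      simp only [hVn', upd]; split <;> simp
    have hVn'i₁ : Vn' i₁ = w := by simp [hVn', upd]
    have hagree : ∀ χ, ¬ nomIn i₀ χ → ¬ nomIn i₁ χ →
        ∀ v, sat ⟨R, Vp, Vn⟩ g v χ ↔ sat ⟨R, Vp, Vn'⟩ g v χ := by
      intro χ h0 h1 v
      refine sat_nom_congr R Vp Vn Vn' χ ?_ g v
      intro j hj
      simp only [hVn', upd]
      split
      · next hji => exact absurd (hji ▸ hj) h1
      · split
        · next hji => exact absurd (hji ▸ hj) h0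
        · rfl
    have hφ' : sat ⟨R, Vp, Vn'⟩ g w φ := (hagree φ h₀φ h₁φ w).mp hφw
    have hconc := hq Vp Vn' g ⟨?_, ?_⟩ w hVn'i₀
    · exact hconc hVn'i₁
    · intro v hv
      have hv' : Vn' i₀ = v := hv
      have : v = w := by rw [← hv', hVn'i₀]
      exact this ▸ hφ'
    · intro v hv hcontra
      have hc' : Vn' i₁ = v := hcontra
      have hvw : v = w := by rw [← hc', hVn'i₁]
      exact hψw ((hagree ψ h₀ψ h₁ψ w).mpr (hvw ▸ hv))
end

section
/- (Soundness of the approximation rule for ◇) For any Kripke frame F = (W,R), valuation V, assignment g, and nominal j not occurring in α: (1) if (F,V),g ⊩ i ≤ ◇α then there is a valuation V' agreeing with V except possibly on j such that (F,V'),g ⊩ i ≤ ◇j and (F,V'),g ⊩ j ≤ α; (2) conversely, if (F,V),g ⊩ i ≤ ◇j and (F,V),g ⊩ j ≤ α then (F,V),g ⊩ i ≤ ◇α. -/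
lemma sat_congr {W : Type} (R : W → W → Prop) (Vp : ℕ → W → Prop)
    (Vn Vn' : ℕ → W) (j : ℕ) (h : ∀ k, k ≠ j → Vn' k = Vn k) :
    ∀ φ, ¬ nomIn j φ → ∀ g w,
      (sat ⟨R, Vp, Vn'⟩ g w φ ↔ sat ⟨R, Vp, Vn⟩ g w φ) := by
  intro φ
  induction φ with
  | nom k =>
    intro hn g w
    simp only [nomIn] at hn
    simp [sat, h k hn]
  | atN k φ ih =>
    intro hn g w
    simp only [nomIn, not_or] at hn
    simp only [sat, h k hn.1]
    exact ih hn.2 g _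
  | prop p => intro _ g w; simp [sat]
  | svar x => intro _ g w; simp [sat]
  | bot => intro _ g w; simp [sat]
  | top => intro _ g w; simp [sat]
  | neg φ ih => intro hn g w; simp only [sat]; rw [ih hn]
  | and φ ψ ih1 ih2 =>
    intro hn g w; simp only [nomIn, not_or] at hn
    simp only [sat]; rw [ih1 hn.1, ih2 hn.2]
  | or φ ψ ih1 ih2 =>
    intro hn g w; simp only [nomIn, not_or] at hn
    simp only [sat]; rw [ih1 hn.1, ih2 hn.2]
  | imp φ ψ ih1 ih2 =>
    intro hn g w; simp only [nomIn, not_or] at hn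
    simp only [sat]; rw [ih1 hn.1, ih2 hn.2]
  | box φ ih => intro hn g w; simp only [sat]; simp_rw [ih hn]
  | dia φ ih => intro hn g w; simp only [sat]; simp_rw [ih hn]
  | atS x φ ih => intro hn g w; simp only [sat]; rw [ih hn]
  | bind x φ ih => intro hn g w; simp only [sat]; rw [ih hn]
  | bbox φ ih => intro hn g w; simp only [sat]; simp_rw [ih hn]
  | bdia φ ih => intro hn g w; simp only [sat]; simp_rw [ih hn]
  | glA φ ih => intro hn g w; simp only [sat]; simp_rw [ih hn]
  | glE φ ih => intro hn g w; simp only [sat]; simp_rw [ih hn]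
  | sall x φ ih => intro hn g w; simp only [sat]; simp_rw [ih hn]
  | sex x φ ih => intro hn g w; simp only [sat]; simp_rw [ih hn]

theorem approximation_dia_sound {W : Type} (R : W → W → Prop)
    (Vp : ℕ → W → Prop) (Vn : ℕ → W) (g : ℕ → W)
    (i j : ℕ) (α : Form) (hji : j ≠ i) (hjα : ¬ nomIn j α) :
    (holdsIneq ⟨R, Vp, Vn⟩ g (.nom i) (.dia α) →
      ∃ Vn' : ℕ → W, (∀ k, k ≠ j → Vn' k = Vn k) ∧
        holdsIneq ⟨R, Vp, Vn'⟩ g (.nom i) (.dia (.nom j)) ∧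
        holdsIneq ⟨R, Vp, Vn'⟩ g (.nom j) α) ∧
    (holdsIneq ⟨R, Vp, Vn⟩ g (.nom i) (.dia (.nom j)) →
      holdsIneq ⟨R, Vp, Vn⟩ g (.nom j) α →
      holdsIneq ⟨R, Vp, Vn⟩ g (.nom i) (.dia α)) := by
  constructor
  · intro h
    obtain ⟨v, hRv, hv⟩ := h (Vn i) rfl
    refine ⟨fun k => if k = j then v else Vn k, fun k hk => if_neg hk, ?_, ?_⟩
    · intro u hu
      simp only [sat, if_neg (Ne.symm hji)] at hu ⊢
      exact ⟨v, hu ▸ hRv, by simp⟩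
    · intro u hu
      simp only [sat, if_pos rfl] at hu
      subst hu
      exact (sat_congr R Vp Vn _ j (fun k hk => if_neg hk) α hjα g v).mpr hv
  · intro h1 h2 w hw
    obtain ⟨v, hRv, hv⟩ := h1 w hw
    exact ⟨v, hRv, h2 v hv⟩
end

section
/- (Soundness of the approximation rule for →) For any Kripke frame F, valuation V, assignment g, and fresh nominals j, k not occurring in α, β: (1) if (F,V),g ⊩ α → β ≤ ¬i, then the valuation V' agreeing with V except V'(j)=V'(k)=V(i) satisfies (F,V'),g ⊩ j ≤ α, (F,V'),g ⊩ β ≤ ¬k, and (F,V'),g ⊩ j → ¬k ≤ ¬i; (2) if (F,V),g ⊩ j ≤ α, (F,V),g ⊩ β ≤ ¬k and (F,V),g ⊩ j → ¬k ≤ ¬i, then (F,V),g ⊩ α → β ≤ ¬i. -/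
/-!
Since nominals denote single worlds, `φ ≤ ¬i` says exactly that `φ` fails at `V(i)`, and `j ≤ φ`
that `φ` holds at `V(j)`. So `α → β ≤ ¬i` means `α` holds and `β` fails at `V(i)`, while
`j → ¬k ≤ ¬i` means `V(j) = V(i) = V(k)`; with these readings both directions are immediate.
Re-pointing the fresh nominals `j`, `k` to `V(i)` does not change the truth of `α` and `β`.
-/

theorem upd_self {W : Type} (f : ℕ → W) (x : ℕ) (w : W) : upd f x w x = w := if_pos rfl

theorem upd_of_ne {W : Type} (f : ℕ → W) {x y : ℕ} (w : W) (h : y ≠ x) :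
    upd f x w y = f y :=
  if_neg h

theorem upd_of_eq {W : Type} {f : ℕ → W} {x y : ℕ} {w : W} (h : f y = w) :
    upd f x w y = w := by
  unfold upd
  split_ifs
  exacts [rfl, h]

section Semantics

variable {W : Type} {R : W → W → Prop} {Vp : ℕ → W → Prop}

theorem sat_congr_of_nomIn {Vn Vn' : ℕ → W} {φ : Form}
    (h : ∀ n, nomIn n φ → Vn n = Vn' n) (g : ℕ → W) (w : W) :
    sat ⟨R, Vp, Vn⟩ g w φ ↔ sat ⟨R, Vp, Vn'⟩ g w φ := by
  induction φ generalizing g w <;> simp_all [sat, nomIn, or_imp, forall_and]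

theorem sat_upd_of_not_nomIn {Vn : ℕ → W} {φ : Form} {j : ℕ} (hj : ¬ nomIn j φ) (v : W)
    (g : ℕ → W) (w : W) :
    sat ⟨R, Vp, upd Vn j v⟩ g w φ ↔ sat ⟨R, Vp, Vn⟩ g w φ :=
  sat_congr_of_nomIn (fun n hn => upd_of_ne Vn v fun hnj : n = j => hj (hnj ▸ hn)) g w

end Semantics

theorem holdsIneq_nom_iff {W : Type} (M : Model W) (g : ℕ → W) (j : ℕ) (φ : Form) :
    holdsIneq M g (.nom j) φ ↔ sat M g (M.Vn j) φ :=
  ⟨fun h => h _ rfl, fun h _ hw => hw ▸ h⟩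

theorem holdsIneq_neg_nom_iff {W : Type} (M : Model W) (g : ℕ → W) (φ : Form) (i : ℕ) :
    holdsIneq M g φ (.neg (.nom i)) ↔ ¬ sat M g (M.Vn i) φ :=
  ⟨fun h hφ => h _ hφ rfl, fun h _ hw hi => h (hi ▸ hw)⟩

theorem approximation_imp_sound_general {W : Type} (R : W → W → Prop)
    (Vp : ℕ → W → Prop) (Vn : ℕ → W) (g : ℕ → W)
    (i j k : ℕ) (α β : Form)
    (hjα : ¬ nomIn j α) (hkα : ¬ nomIn k α)
    (hjβ : ¬ nomIn j β) (hkβ : ¬ nomIn k β) :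
    (holdsIneq ⟨R, Vp, Vn⟩ g (.imp α β) (.neg (.nom i)) →
      (holdsIneq ⟨R, Vp, upd (upd Vn j (Vn i)) k (Vn i)⟩ g (.nom j) α ∧
       holdsIneq ⟨R, Vp, upd (upd Vn j (Vn i)) k (Vn i)⟩ g β (.neg (.nom k)) ∧
       holdsIneq ⟨R, Vp, upd (upd Vn j (Vn i)) k (Vn i)⟩ g
         (.imp (.nom j) (.neg (.nom k))) (.neg (.nom i)))) ∧
    (holdsIneq ⟨R, Vp, Vn⟩ g (.nom j) α →
     holdsIneq ⟨R, Vp, Vn⟩ g β (.neg (.nom k)) →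
     holdsIneq ⟨R, Vp, Vn⟩ g (.imp (.nom j) (.neg (.nom k))) (.neg (.nom i)) →
     holdsIneq ⟨R, Vp, Vn⟩ g (.imp α β) (.neg (.nom i))) := by
  simp only [holdsIneq_nom_iff, holdsIneq_neg_nom_iff]
  have hj : upd (upd Vn j (Vn i)) k (Vn i) j = Vn i := upd_of_eq (upd_self ..)
  have hk : upd (upd Vn j (Vn i)) k (Vn i) k = Vn i := upd_self ..
  have hi : upd (upd Vn j (Vn i)) k (Vn i) i = Vn i := upd_of_eq (upd_of_eq rfl)
  refine ⟨fun hαβ => ?_, fun hα hβ hjk => ?_⟩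
  · simp only [sat, Classical.not_imp, not_not] at hαβ ⊢
    rw [hj, hk, hi, sat_upd_of_not_nomIn hkα, sat_upd_of_not_nomIn hjα,
      sat_upd_of_not_nomIn hkβ, sat_upd_of_not_nomIn hjβ]
    exact ⟨hαβ.1, hαβ.2, rfl, rfl⟩
  · simp only [sat, Classical.not_imp, not_not] at hjk ⊢
    obtain ⟨hji, hki⟩ := hjk
    exact ⟨hji ▸ hα, hki ▸ hβ⟩

theorem approximation_imp_sound {W : Type} (R : W → W → Prop)
    (Vp : ℕ → W → Prop) (Vn : ℕ → W) (g : ℕ → W)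
    (i j k : ℕ) (α β : Form)
    (hji : j ≠ i) (hki : k ≠ i) (hjk : j ≠ k)
    (hjα : ¬ nomIn j α) (hkα : ¬ nomIn k α)
    (hjβ : ¬ nomIn j β) (hkβ : ¬ nomIn k β) :
    (holdsIneq ⟨R, Vp, Vn⟩ g (.imp α β) (.neg (.nom i)) →
      (holdsIneq ⟨R, Vp, upd (upd Vn j (Vn i)) k (Vn i)⟩ g (.nom j) α ∧
       holdsIneq ⟨R, Vp, upd (upd Vn j (Vn i)) k (Vn i)⟩ g β (.neg (.nom k)) ∧
       holdsIneq ⟨R, Vp, upd (upd Vn j (Vn i)) k (Vn i)⟩ g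
         (.imp (.nom j) (.neg (.nom k))) (.neg (.nom i)))) ∧
    (holdsIneq ⟨R, Vp, Vn⟩ g (.nom j) α →
     holdsIneq ⟨R, Vp, Vn⟩ g β (.neg (.nom k)) →
     holdsIneq ⟨R, Vp, Vn⟩ g (.imp (.nom j) (.neg (.nom k))) (.neg (.nom i)) →
     holdsIneq ⟨R, Vp, Vn⟩ g (.imp α β) (.neg (.nom i))) :=
  approximation_imp_sound_general R Vp Vn g i j k α β hjα hkα hjβ hkβ
end
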